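/- Let p = 3, let k be an even positive integer not divisible by 3, and let θ ∈ E_3 (i.e., |θ|_3 = 1 and θ ≡ 1 mod 3). Then the polynomial g(x) = θx^{k+1} - x^k + (θ² + 1)x - 2θ has a unique root x_* ∈ ℤ_3 with x_* ≡ 2 (mod 3). -/

import Mathlib

/-!
Reduced mod 3 (where `θ ≡ 1` and `2 ≡ -1`), `g(2)` becomes `-6 ≡ 0` and, since `k` is even,
`g'(2)` becomes `2k + 3 ≡ -k`, a unit because `3 ∤ k`. Hensel's lemma in `ℤ_[3]` then gives a unique
root in the open unit ball around `2`, which in `ℚ_[3]` is the closed ball of radius `1/3`.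
-/

/-- `x ∈ E_p` : a unit with `|x - 1|_p < p^(-1/(p-1))`. -/
def IsEp (p : ℕ) [Fact p.Prime] (x : ℚ_[p]) : Prop :=
  ‖x‖ = 1 ∧ ‖x - 1‖ < (p : ℝ) ^ (-(1 : ℝ) / ((p : ℝ) - 1))

open Polynomial

namespace PadicInt

variable {p : ℕ} [Fact p.Prime]

theorem toZMod_eq_zero_iff_norm_lt_one (z : ℤ_[p]) : toZMod z = 0 ↔ ‖z‖ < 1 := by
  rw [← RingHom.mem_ker, ker_toZMod, IsLocalRing.mem_maximalIdeal, mem_nonunits]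

theorem toZMod_ne_zero_iff_norm_eq_one (z : ℤ_[p]) : toZMod z ≠ 0 ↔ ‖z‖ = 1 := by
  rw [Ne, toZMod_eq_zero_iff_norm_lt_one, not_lt]
  exact ⟨(norm_le_one z).antisymm, ge_of_eq⟩

theorem existsUnique_eval_eq_zero_of_toZMod {F : ℤ_[p][X]} {a : ℤ_[p]}
    (hFa : toZMod (F.eval a) = 0) (hF'a : toZMod (F.derivative.eval a) ≠ 0) :
    ∃! z : ℤ_[p], F.eval z = 0 ∧ ‖z - a‖ < 1 := by
  rw [toZMod_eq_zero_iff_norm_lt_one] at hFa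
  rw [toZMod_ne_zero_iff_norm_eq_one] at hF'a
  obtain ⟨z, hz, hza, -, huniq⟩ := hensels_lemma (F := F) (a := a) (by simpa [hF'a] using hFa)
  simp only [coe_aeval_eq_eval, hF'a] at hz hza huniq
  exact ⟨z, ⟨hz, hza⟩, fun w ⟨hw, hwa⟩ => huniq w hw hwa⟩

theorem existsUnique_padic_of_existsUnique {P : ℚ_[p] → Prop} {a : ℤ_[p]}
    (h : ∃! z : ℤ_[p], P z ∧ ‖z - a‖ < 1) :
    ∃! x : ℚ_[p], ‖x‖ ≤ 1 ∧ ‖x - (a : ℚ_[p])‖ ≤ (p : ℝ)⁻¹ ∧ P x := by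
  have hball (x : ℚ_[p]) : ‖x - (a : ℚ_[p])‖ ≤ (p : ℝ)⁻¹ ↔ ‖x - (a : ℚ_[p])‖ < 1 := by
    simpa using Padic.norm_le_pow_iff_norm_lt_pow_add_one (x - (a : ℚ_[p])) (-1)
  obtain ⟨z, ⟨hz, hza⟩, huniq⟩ := h
  refine ⟨z, ⟨z.2, (hball z).2 hza, hz⟩, fun x ⟨hx, hxa, hPx⟩ => ?_⟩
  exact congrArg Subtype.val (huniq ⟨x, hx⟩ ⟨hPx, (hball x).1 hxa⟩)

end PadicInt

theorem IsEp.norm_sub_one_lt_one {p : ℕ} [Fact p.Prime] {x : ℚ_[p]} (hx : IsEp p x) :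
    ‖x - 1‖ < 1 := by
  have hp : (1 : ℝ) < p := mod_cast (Fact.out : p.Prime).one_lt
  refine hx.2.trans (Real.rpow_lt_one_of_one_lt_of_neg hp ?_)
  exact div_neg_of_neg_of_pos (by norm_num) (by linarith)

section gPoly

variable {R : Type*} [CommRing R]

noncomputable def gPoly (θ : R) (k : ℕ) : R[X] :=
  C θ * X ^ (k + 1) - X ^ k + C (θ ^ 2 + 1) * X - C (2 * θ)

theorem eval_gPoly (θ x : R) (k : ℕ) :
    (gPoly θ k).eval x = θ * x ^ (k + 1) - x ^ k + (θ ^ 2 + 1) * x - 2 * θ := by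
  simp [gPoly]

theorem derivative_eval_gPoly (θ x : R) (k : ℕ) :
    (gPoly θ k).derivative.eval x = θ * (k + 1) * x ^ k - k * x ^ (k - 1) + (θ ^ 2 + 1) := by
  simp only [gPoly, derivative_sub, derivative_add, derivative_C_mul_X_pow, derivative_X_pow,
    derivative_C_mul_X, derivative_C, sub_zero]
  simp

theorem map_gPoly {S : Type*} [CommRing S] (f : R →+* S) (θ : R) (k : ℕ) :
    (gPoly θ k).map f = gPoly (f θ) k := by
  simp only [gPoly, Polynomial.map_sub, Polynomial.map_add, Polynomial.map_mul, Polynomial.map_pow,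
    map_C, map_X]
  rw [map_add, map_pow, map_one, map_mul, map_ofNat]

theorem eval_gPoly_one_neg_one {k : ℕ} (hk : Even k) : (gPoly (1 : R) k).eval (-1) = -6 := by
  rw [eval_gPoly, pow_succ, hk.neg_one_pow]
  norm_num

theorem derivative_eval_gPoly_one_neg_one {k : ℕ} (hk : Even k) (hk0 : k ≠ 0) :
    (gPoly (1 : R) k).derivative.eval (-1) = 2 * k + 3 := by
  rw [derivative_eval_gPoly, hk.neg_one_pow, (Nat.Even.sub_odd (by omega) hk odd_one).neg_one_pow]
  ring

theorem eval_gPoly_one_neg_one_eq_zero {k : ℕ} (hk : Even k) :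
    (gPoly (1 : ZMod 3) k).eval (-1) = 0 := by
  rw [eval_gPoly_one_neg_one hk]
  reduce_mod_char

theorem derivative_eval_gPoly_one_neg_one_ne_zero {k : ℕ} (hk : Even k) (hk3 : ¬ 3 ∣ k) :
    (gPoly (1 : ZMod 3) k).derivative.eval (-1) ≠ 0 := by
  have hk0 : k ≠ 0 := by
    rintro rfl
    exact hk3 (dvd_zero 3)
  rw [derivative_eval_gPoly_one_neg_one hk hk0]
  intro h
  apply hk3
  rw [← ZMod.natCast_eq_zero_iff]
  -- `2 * (2k + 3) = k` in `ZMod 3`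
  linear_combination (norm := skip) 2 * h
  ring_nf
  reduce_mod_char

end gPoly

open PadicInt in
theorem hensel_root_near_two_general (k : ℕ) (hke : Even k) (hk3 : ¬ 3 ∣ k)
    (θ : ℚ_[3]) (hθ : IsEp 3 θ) :
    ∃! x : ℚ_[3], ‖x‖ ≤ 1 ∧ ‖x - 2‖ ≤ (3 : ℝ)⁻¹ ∧
      θ * x ^ (k + 1) - x ^ k + (θ ^ 2 + 1) * x - 2 * θ = 0 := by
  set Θ : ℤ_[3] := ⟨θ, hθ.1.le⟩
  have hΘ : toZMod Θ = 1 := by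
    rw [← sub_eq_zero, ← map_one toZMod, ← map_sub, toZMod_eq_zero_iff_norm_lt_one]
    exact hθ.norm_sub_one_lt_one
  have h2 : toZMod (2 : ℤ_[3]) = -1 := by
    rw [map_ofNat]
    decide
  have hg : toZMod ((gPoly Θ k).eval 2) = 0 := by
    rw [← eval_map_apply, map_gPoly, hΘ, h2, eval_gPoly_one_neg_one_eq_zero hke]
  have hg' : toZMod ((gPoly Θ k).derivative.eval 2) ≠ 0 := by
    rw [← eval_map_apply, ← derivative_map, map_gPoly, hΘ, h2]
    exact derivative_eval_gPoly_one_neg_one_ne_zero hke hk3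
  have hroot := existsUnique_eval_eq_zero_of_toZMod hg hg'
  refine existsUnique_padic_of_existsUnique (a := 2) ?_
  refine (existsUnique_congr fun z => and_congr_left' ?_).1 hroot
  rw [eval_gPoly, ← PadicInt.coe_eq_zero]
  push_cast
  rfl

theorem hensel_root_near_two (k : ℕ) (hk : 1 ≤ k) (hke : Even k) (hk3 : ¬ 3 ∣ k)
    (θ : ℚ_[3]) (hθ : IsEp 3 θ) :
    ∃! x : ℚ_[3], ‖x‖ ≤ 1 ∧ ‖x - 2‖ ≤ (3 : ℝ)⁻¹ ∧
      θ * x ^ (k + 1) - x ^ k + (θ ^ 2 + 1) * x - 2 * θ = 0 :=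
  hensel_root_near_two_general k hke hk3 θ hθ
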